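/- Let V_1, …, V_k be complex n × n matrices, let Φ(a) = Σ_{r=1}^k V_rᴴ * a * V_r, and let ρ ∈ Matrix n n ℂ be positive definite such that Φ(ρ) = Σ_r V_rᴴ * ρ * V_r is positive definite. Let c ∈ Matrix n n ℂ and set d := ρ^{1/2} * c * ρ^{-1/2}. Assume d = Φ(ρ)^{1/2} * c * Φ(ρ)^{-1/2} and that d commutes with V_rᴴ for every r. Then the modified error map Φ_ρ leaves c invariant: Φ(ρ)^{-1/2} * Φ(ρ^{1/2} * c * ρ^{1/2}) * Φ(ρ)^{-1/2} = c. -/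

import Mathlib

open Matrix
open scoped ComplexOrder

/-- The positive semidefinite square root of a positive semidefinite matrix (the definition
that Mathlib had in December 2024, since removed). -/
noncomputable def Matrix.PosSemidef.sqrt {n 𝕜 : Type*} [Fintype n] [DecidableEq n] [RCLike 𝕜]
    {A : Matrix n n 𝕜} (hA : A.PosSemidef) : Matrix n n 𝕜 :=
  hA.1.eigenvectorUnitary.1 * diagonal ((↑) ∘ (√·) ∘ hA.1.eigenvalues) *
  (star hA.1.eigenvectorUnitary : Matrix n n 𝕜)

/-!
Write `S = ρ^{1/2}`, `T = Φ(ρ)^{1/2}` and `d = S c S⁻¹ = T c T⁻¹`. Then `S c S = d S² = d ρ`, and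
since `d` commutes with every `V_rᴴ`, `Φ(S c S) = d Φ(ρ) = T c T⁻¹ T² = T c T`. Conjugating by
`T⁻¹` on both sides leaves `c`.
-/

theorem Finset.sum_mul_mul_eq_mul_sum_of_commute {ι R : Type*} [Semiring R] (s : Finset ι)
    (A B : ι → R) {d : R} (x : R) (h : ∀ i ∈ s, Commute d (A i)) :
    ∑ i ∈ s, A i * (d * x) * B i = d * ∑ i ∈ s, A i * x * B i := by
  rw [Finset.mul_sum]
  refine Finset.sum_congr rfl fun i hi ↦ ?_
  rw [← mul_assoc, ← (h i hi).eq, mul_assoc d, mul_assoc d]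

namespace Matrix

theorem mul_mul_inv_mul_mul_self {n R : Type*} [Fintype n] [DecidableEq n] [CommRing R]
    {S : Matrix n n R} (c : Matrix n n R) (hS : IsUnit S.det) :
    S * c * S⁻¹ * (S * S) = S * c * S := by
  rw [← Matrix.mul_assoc, nonsing_inv_mul_cancel_right S (S * c) hS]

variable {n 𝕜 : Type*} [Fintype n] [DecidableEq n] [RCLike 𝕜] {A : Matrix n n 𝕜}

theorem PosSemidef.sqrt_eq_cfc (hA : A.PosSemidef) : hA.sqrt = cfc Real.sqrt A := by
  rw [hA.1.cfc_eq, IsHermitian.cfc, Unitary.conjStarAlgAut_apply]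
  rfl

theorem PosSemidef.sqrt_mul_self (hA : A.PosSemidef) : hA.sqrt * hA.sqrt = A := by
  rw [hA.sqrt_eq_cfc, ← cfc_mul Real.sqrt Real.sqrt A]
  conv_rhs => rw [← cfc_id' ℝ A hA.1.isSelfAdjoint]
  refine cfc_congr fun x hx ↦ ?_
  obtain ⟨i, rfl⟩ := hA.1.spectrum_real_eq_range_eigenvalues ▸ hx
  exact Real.mul_self_sqrt (hA.eigenvalues_nonneg i)

theorem PosDef.isUnit_det_sqrt (hA : A.PosDef) : IsUnit hA.posSemidef.sqrt.det :=
  isUnit_of_mul_isUnit_left <| by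
    rw [← det_mul, hA.posSemidef.sqrt_mul_self, ← isUnit_iff_isUnit_det]
    exact hA.isUnit

end Matrix

/-- Passive error correction: if `d = ρ^{1/2} c ρ^{-1/2} = Φ(ρ)^{1/2} c Φ(ρ)^{-1/2}`
commutes with every `V_rᴴ`, then the modified error map
`Φ_ρ(a) = Φ(ρ)^{-1/2} Φ(ρ^{1/2} a ρ^{1/2}) Φ(ρ)^{-1/2}` leaves `c` invariant. -/
theorem modified_error_map_leaves_invariant
    {n k : ℕ} (V : Fin k → Matrix (Fin n) (Fin n) ℂ)
    (ρ : Matrix (Fin n) (Fin n) ℂ) (hρ : ρ.PosDef)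
    (hΦρ : (∑ r, (V r)ᴴ * ρ * V r).PosDef)
    (c : Matrix (Fin n) (Fin n) ℂ)
    (hd1 : hρ.posSemidef.sqrt * c * (hρ.posSemidef.sqrt)⁻¹ =
      hΦρ.posSemidef.sqrt * c * (hΦρ.posSemidef.sqrt)⁻¹)
    (hd2 : ∀ r, (hρ.posSemidef.sqrt * c * (hρ.posSemidef.sqrt)⁻¹) * (V r)ᴴ =
      (V r)ᴴ * (hρ.posSemidef.sqrt * c * (hρ.posSemidef.sqrt)⁻¹)) :
    (hΦρ.posSemidef.sqrt)⁻¹ *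
        (∑ r, (V r)ᴴ * (hρ.posSemidef.sqrt * c * hρ.posSemidef.sqrt) * V r) *
        (hΦρ.posSemidef.sqrt)⁻¹ = c := by
  set S := hρ.posSemidef.sqrt
  set T := hΦρ.posSemidef.sqrt
  have hT : IsUnit T.det := hΦρ.isUnit_det_sqrt
  have hΦ : ∑ r, (V r)ᴴ * (S * c * S) * V r = T * c * T⁻¹ * (T * T) := by
    rw [← mul_mul_inv_mul_mul_self c hρ.isUnit_det_sqrt, hρ.posSemidef.sqrt_mul_self,
      Finset.sum_mul_mul_eq_mul_sum_of_commute _ _ _ _ fun r _ ↦ hd2 r, hd1,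
      hΦρ.posSemidef.sqrt_mul_self]
  rw [hΦ, mul_mul_inv_mul_mul_self c hT, Matrix.mul_assoc T c T,
    nonsing_inv_mul_cancel_left T (c * T) hT, mul_nonsing_inv_cancel_right T c hT]
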